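/- Every finite word w contains at most |w| + 1 distinct palindromic factors (including the empty word). -/

import Mathlib

/-!
Appending a letter to a word creates at most one new palindromic factor. A new factor of
`w ++ [a]` must be a suffix, and if `u` is a palindromic suffix strictly shorter than another
palindromic suffix `v`, then reversing shows `u` is also a prefix of `v`, so `u` already occurs
in `w`. Hence only the longest palindromic suffix can be new, and induction on `w` gives the bound.
-/

/-- The set of palindromic factors of a word `w` (including the empty word). -/
def palFactors {α : Type*} [DecidableEq α] (w : List α) : Finset (List α) :=
  ((w.inits.flatMap List.tails).filter fun u => u.reverse = u).toFinset

/-- A word is rich if it has `|w| + 1` distinct palindromic factors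
(including the empty word). -/
def Rich {α : Type*} [DecidableEq α] (w : List α) : Prop :=
  (palFactors w).card = w.length + 1

lemma mem_palFactors {α : Type*} [DecidableEq α] {w u : List α} :
    u ∈ palFactors w ↔ u <:+: w ∧ u.reverse = u := by
  simp only [palFactors, List.mem_toFinset, List.mem_filter, List.mem_flatMap,
    List.mem_inits, List.mem_tails, decide_eq_true_eq]
  constructor
  · rintro ⟨⟨p, hp, hup⟩, hr⟩
    exact ⟨hup.isInfix.trans hp.isInfix, hr⟩
  · rintro ⟨⟨s, t, rfl⟩, hr⟩
    exact ⟨⟨s ++ u, List.prefix_append _ _, List.suffix_append _ _⟩, hr⟩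

namespace List

variable {α : Type*}

theorem IsSuffix.isPrefix_of_reverse_eq {u v : List α} (h : u <:+ v)
    (hu : u.reverse = u) (hv : v.reverse = v) : u <+: v := by
  rw [← reverse_suffix, hu, hv]
  exact h

theorem IsPrefix.isInfix_of_isSuffix_concat {u v w : List α} {a : α} (huv : u <+: v)
    (hlt : u.length < v.length) (hv : v <:+ w ++ [a]) : u <:+: w := by
  obtain rfl | ⟨t, rfl, ht⟩ := suffix_concat_iff.mp hv
  · simp at hlt
  obtain rfl | hut := prefix_concat_iff.mp huv
  · exact absurd hlt (lt_irrefl _)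
  · exact hut.isInfix.trans ht.isInfix

theorem eq_of_reverse_eq_of_not_isInfix {u v w : List α} {a : α}
    (hu : u <:+: w ++ [a]) (hur : u.reverse = u) (hu' : ¬ u <:+: w)
    (hv : v <:+: w ++ [a]) (hvr : v.reverse = v) (hv' : ¬ v <:+: w)
    (hlen : u.length ≤ v.length) : u = v := by
  have hus : u <:+ w ++ [a] := (infix_concat_iff.mp hu).resolve_right hu'
  have hvs : v <:+ w ++ [a] := (infix_concat_iff.mp hv).resolve_right hv'
  have huv : u <:+ v := suffix_of_suffix_length_le hus hvs hlen
  obtain heq | hlt := hlen.eq_or_lt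
  · exact huv.eq_of_length heq
  · exact absurd ((huv.isPrefix_of_reverse_eq hur hvr).isInfix_of_isSuffix_concat hlt hvs) hu'

end List

lemma card_palFactors_concat_le {α : Type*} [DecidableEq α] (w : List α) (a : α) :
    (palFactors (w ++ [a])).card ≤ (palFactors w).card + 1 := by
  have hnew : (palFactors (w ++ [a]) \ palFactors w).card ≤ 1 := by
    refine Finset.card_le_one.mpr fun u hu v hv => ?_
    simp only [Finset.mem_sdiff, mem_palFactors, not_and] at hu hv
    obtain ⟨⟨hu, hur⟩, hu'⟩ := hu
    obtain ⟨⟨hv, hvr⟩, hv'⟩ := hv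
    rcases le_total u.length v.length with h | h
    · exact List.eq_of_reverse_eq_of_not_isInfix hu hur (hu' · hur) hv hvr (hv' · hvr) h
    · exact (List.eq_of_reverse_eq_of_not_isInfix hv hvr (hv' · hvr) hu hur (hu' · hur) h).symm
  calc (palFactors (w ++ [a])).card
      ≤ (palFactors (w ++ [a]) \ palFactors w).card + (palFactors w).card :=
        Finset.card_le_card_sdiff_add_card
    _ ≤ (palFactors w).card + 1 := by omega

/-- every finite word contains at most  distinct palindromic
factors (including the empty word). -/
theorem stmt_12 {α : Type*} [DecidableEq α] (w : List α) :
    (palFactors w).card ≤ w.length + 1 := by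
  induction w using List.reverseRecOn with
  | nil => simp [palFactors]
  | append_singleton w a ih =>
    calc (palFactors (w ++ [a])).card
        ≤ (palFactors w).card + 1 := card_palFactors_concat_le w a
      _ ≤ (w ++ [a]).length + 1 := by simpa using ih
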